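/- Let p be a prime number with p ≡ 4 or 7 (mod 9), so that p = π₁π₂ with prime elements π₁, π₂ of ℤ[ζ₃] satisfying π₂ = τ(π₁) (τ complex conjugation). If π₁ ≡ π₂ ≡ 1 (mod 3ℤ[ζ₃]), then π₁ ≢ 1 (mod λ³) and π₂ ≢ 1 (mod λ³) in ℤ[ζ₃], where λ = 1 − ζ₃. -/

import Mathlib

/-! Complex conjugation maps `λ` to an associate of `λ`, so `λ³ ∣ π₁ - 1` and `λ³ ∣ π₂ - 1` are
equivalent; if they held, `λ³` would divide `π₁π₂ - 1 = p - 1`. But `(λ²) = (3)` and an integer is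
divisible by `λ` only if it is divisible by `3`, so `λ³ ∣ n` forces `9 ∣ n` for `n ∈ ℤ`, while
`p ≢ 1 (mod 9)`. -/

open IntermediateField NumberField
open scoped nonZeroDivisors

set_option synthInstance.maxHeartbeats 1000000
set_option maxHeartbeats 2000000

noncomputable section

/-- The primitive cube root of unity `ζ₃ = e^{2πi/3}`. -/
def zeta3 : ℂ := Complex.exp (2 * Real.pi * Complex.I / 3)

lemma zeta3_isPrimitiveRoot : IsPrimitiveRoot zeta3 3 := by
  simpa [zeta3] using Complex.isPrimitiveRoot_exp 3 (by norm_num)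

lemma isIntegral_zeta3 : IsIntegral ℚ zeta3 :=
  (zeta3_isPrimitiveRoot.isIntegral (by norm_num)).tower_top

/-- `k₀ = ℚ(ζ₃)`, realized as a subfield of `ℂ`. -/
def k0c : IntermediateField ℚ ℂ := ℚ⟮zeta3⟯

instance : NumberField k0c where
  to_finiteDimensional := by
    apply IntermediateField.finiteDimensional_adjoin
    rintro x rfl
    exact isIntegral_zeta3

/-- `ζ₃` as an element of `k₀ = ℚ(ζ₃)`. -/
def zetaE : ↥k0c := ⟨zeta3, IntermediateField.mem_adjoin_simple_self ℚ zeta3⟩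

lemma isIntegral_zetaE : IsIntegral ℤ zetaE := by
  have h : algebraMap ↥k0c ℂ zetaE = zeta3 := rfl
  rw [← isIntegral_algebraMap_iff (algebraMap ↥k0c ℂ).injective, h]
  exact zeta3_isPrimitiveRoot.isIntegral (by norm_num)

/-- `ζ₃` as an element of the ring of Eisenstein integers `ℤ[ζ₃] = 𝓞(ℚ(ζ₃))`. -/
def zetaO : 𝓞 k0c := ⟨zetaE, isIntegral_zetaE⟩

/-- `λ = 1 - ζ₃`, the prime element of `ℤ[ζ₃]` above `3`. -/
def lamO : 𝓞 k0c := 1 - zetaO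

namespace IsPrimitiveRoot

open IsCyclotomicExtension.Rat RingOfIntegers

variable {K : Type*} [Field K] {p : ℕ} {ζ : K}

theorem associated_mapRingHom_toInteger_sub_one [NeZero p] (hζ : IsPrimitiveRoot ζ p)
    (f : K →+* K) : Associated (mapRingHom f hζ.toInteger - 1) (hζ.toInteger - 1) :=
  (associated_sub_one_of_isPrimitiveRoot p hζ (hζ.map_of_injective f.injective)).symm

theorem toInteger_sub_one_pow_dvd_mapRingHom_sub_one [NeZero p] (hζ : IsPrimitiveRoot ζ p)
    (f : K →+* K) {x : 𝓞 K} {k : ℕ} (h : (hζ.toInteger - 1) ^ k ∣ x - 1) :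
    (hζ.toInteger - 1) ^ k ∣ mapRingHom f x - 1 := by
  have hf := map_dvd (mapRingHom f) h
  rw [map_pow, map_sub, map_sub, map_one] at hf
  exact (hζ.associated_mapRingHom_toInteger_sub_one f).pow_pow.dvd_iff_dvd_left.mp hf

theorem sq_dvd_of_toInteger_sub_one_pow_dvd_intCast [hp : Fact p.Prime] [NumberField K]
    [IsCyclotomicExtension {p} ℚ K] (hζ : IsPrimitiveRoot ζ p) {n : ℤ}
    (h : (hζ.toInteger - 1) ^ p ∣ (n : 𝓞 K)) : (p : ℤ) ^ 2 ∣ n := by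
  obtain ⟨m, rfl⟩ : (p : ℤ) ∣ n := (zeta_sub_one_dvd_intCast_iff' p hζ).mp
    ((dvd_pow_self _ hp.out.ne_zero).trans h)
  -- `p = (ζ - 1) ^ (p - 1) * u` lets us cancel `(ζ - 1) ^ (p - 1)` from `h`.
  obtain ⟨u, hu⟩ := associated_zeta_sub_one_pow_prime p hζ
  have hcancel : (hζ.toInteger - 1) ^ (p - 1) * (hζ.toInteger - 1) ∣
      (hζ.toInteger - 1) ^ (p - 1) * (u * m) := by
    rwa [← pow_succ, Nat.sub_add_cancel hp.out.one_le, ← mul_assoc, hu, ← Int.cast_natCast,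
      ← Int.cast_mul]
  have hm : hζ.toInteger - 1 ∣ (m : 𝓞 K) := Units.dvd_mul_left.mp
    ((mul_dvd_mul_iff_left (pow_ne_zero _ hζ.zeta_sub_one_prime'.ne_zero)).mp hcancel)
  rw [pow_two]
  exact mul_dvd_mul_left _ ((zeta_sub_one_dvd_intCast_iff' p hζ).mp hm)

end IsPrimitiveRoot

open RingOfIntegers

lemma zetaE_isPrimitiveRoot : IsPrimitiveRoot zetaE 3 :=
  zeta3_isPrimitiveRoot.of_map_of_injective (f := algebraMap k0c ℂ) (algebraMap k0c ℂ).injective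

instance : IsCyclotomicExtension {3} ℚ k0c := by
  change IsCyclotomicExtension {3} ℚ ℚ⟮zeta3⟯.toSubalgebra
  rw [IntermediateField.adjoin_simple_toSubalgebra_of_isAlgebraic isIntegral_zeta3.isAlgebraic]
  exact zeta3_isPrimitiveRoot.adjoin_isCyclotomicExtension ℚ

instance : IsGalois ℚ k0c := IsCyclotomicExtension.isGalois {3} ℚ k0c

lemma lamO_pow_dvd_iff {k : ℕ} {x : 𝓞 k0c} :
    lamO ^ k ∣ x ↔ (zetaE_isPrimitiveRoot.toInteger - 1) ^ k ∣ x := by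
  have hlam : lamO = -(zetaE_isPrimitiveRoot.toInteger - 1) := by rw [neg_sub]; rfl
  rw [hlam]
  exact (Associated.refl _).neg_left.pow_pow.dvd_iff_dvd_left

def conjO : 𝓞 k0c →+* 𝓞 k0c :=
  mapRingHom ((Complex.conjAe.restrictScalars ℚ).restrictNormal k0c)

lemma conjO_coe (x : 𝓞 k0c) : ((conjO x : k0c) : ℂ) = starRingEnd ℂ ((x : k0c) : ℂ) :=
  (Complex.conjAe.restrictScalars ℚ).restrictNormal_commutes k0c (x : k0c)

lemma lamO_pow_dvd_sub_one_of_conj {a b : 𝓞 k0c}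
    (hab : ((b : k0c) : ℂ) = starRingEnd ℂ ((a : k0c) : ℂ)) {k : ℕ} (h : lamO ^ k ∣ a - 1) :
    lamO ^ k ∣ b - 1 := by
  obtain rfl : b = conjO a := by ext; rw [conjO_coe, hab]
  rw [lamO_pow_dvd_iff] at h ⊢
  exact zetaE_isPrimitiveRoot.toInteger_sub_one_pow_dvd_mapRingHom_sub_one _ h

lemma nine_dvd_of_lamO_pow_three_dvd {n : ℤ} (h : lamO ^ 3 ∣ (n : 𝓞 k0c)) : 9 ∣ n := by
  rw [lamO_pow_dvd_iff] at h
  simpa using zetaE_isPrimitiveRoot.sq_dvd_of_toInteger_sub_one_pow_dvd_intCast h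

theorem primary_prime_not_one_mod_lambda_cubed_split_general
    (p : ℕ) (hp9 : p % 9 = 4 ∨ p % 9 = 7)
    (π₁ π₂ : 𝓞 k0c)
    (hfact : (p : 𝓞 k0c) = π₁ * π₂)
    (hconj : ((π₂ : ↥k0c) : ℂ) = (starRingEnd ℂ) ((π₁ : ↥k0c) : ℂ)) :
    ¬ (lamO ^ 3 ∣ (π₁ - 1)) ∧ ¬ (lamO ^ 3 ∣ (π₂ - 1)) := by
  have hconj' : ((π₁ : ↥k0c) : ℂ) = (starRingEnd ℂ) ((π₂ : ↥k0c) : ℂ) := by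
    rw [hconj, Complex.conj_conj]
  have not_both : ¬ (lamO ^ 3 ∣ π₁ - 1 ∧ lamO ^ 3 ∣ π₂ - 1) := by
    rintro ⟨h₁, h₂⟩
    have hp_sub_one : ((p - 1 : ℤ) : 𝓞 k0c) = (π₁ - 1) * π₂ + (π₂ - 1) := by
      push_cast
      rw [hfact]
      ring
    have h9 := nine_dvd_of_lamO_pow_three_dvd
      (hp_sub_one ▸ dvd_add (dvd_mul_of_dvd_left h₁ _) h₂)
    omega
  exact ⟨fun h ↦ not_both ⟨h, lamO_pow_dvd_sub_one_of_conj hconj h⟩,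
    fun h ↦ not_both ⟨lamO_pow_dvd_sub_one_of_conj hconj' h, h⟩⟩

/-- **Lemma 3.1**: let `p ≡ 4, 7 (mod 9)` be a prime, `p = π₁π₂` with prime elements
`π₁, π₂` of `ℤ[ζ₃]`, `π₂ = τ(π₁)` (complex conjugation). If `π₁ ≡ π₂ ≡ 1 (mod 3ℤ[ζ₃])`
then `π₁ ≢ 1 (mod λ³)` and `π₂ ≢ 1 (mod λ³)`, where `λ = 1 - ζ₃`. -/
theorem primary_prime_not_one_mod_lambda_cubed_split
    (p : ℕ) (hp : p.Prime) (hp9 : p % 9 = 4 ∨ p % 9 = 7)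
    (π₁ π₂ : 𝓞 k0c) (hπ₁ : Prime π₁) (hπ₂ : Prime π₂)
    (hfact : (p : 𝓞 k0c) = π₁ * π₂)
    (hconj : ((π₂ : ↥k0c) : ℂ) = (starRingEnd ℂ) ((π₁ : ↥k0c) : ℂ))
    (hmod : (3 : 𝓞 k0c) ∣ (π₁ - 1) ∧ (3 : 𝓞 k0c) ∣ (π₂ - 1)) :
    ¬ (lamO ^ 3 ∣ (π₁ - 1)) ∧ ¬ (lamO ^ 3 ∣ (π₂ - 1)) :=
  primary_prime_not_one_mod_lambda_cubed_split_general p hp9 π₁ π₂ hfact hconj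

end
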